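/- (Freedom in the normal form for group elements.) Let v ∈ ℂ^d and η ∈ G, let κ ∈ G, and set η̂ = κ★η★(Ξ_v(κ⁻¹)); assume Ξ_v η̂ = η̂. Let κ̃ ∈ G, set η̃ = κ̃★η★(Ξ_v(κ̃⁻¹)), and let δ = κ̃★κ⁻¹. Then Ξ_v η̃ = η̃ if and only if Ξ_v δ = δ, and in that case η̃ = δ★η̂★δ⁻¹. -/

import Mathlib

open scoped BigOperators

/-- Convolution product on `ℂ^W`: `(δ★δ′)_w = Σ_{w=w₁w₂} δ_{w₁} δ′_{w₂}`. -/
noncomputable def conv {A : Type*} (x y : List A → ℂ) : List A → ℂ :=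
  fun w => ∑ i ∈ Finset.range (w.length + 1), x (w.take i) * y (w.drop i)

/-- Shuffle product of two words, as a multiset of words. -/
def shuffle {A : Type*} : List A → List A → Multiset (List A)
  | [], w => {w}
  | w, [] => {w}
  | a :: u, b :: v =>
      ((shuffle u (b :: v)).map (a :: ·)) + ((shuffle (a :: u) v).map (b :: ·))

/-- Membership in the group `G`: the shuffle relations with `γ_∅ = 1`. -/
def isGrp {A : Type*} (γ : List A → ℂ) : Prop :=
  γ [] = 1 ∧ ∀ w w' : List A, γ w * γ w' = ((shuffle w w').map γ).sum

/-- Membership in the Lie algebra `𝔤`. -/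
def isLie {A : Type*} (β : List A → ℂ) : Prop :=
  β [] = 0 ∧ ∀ w w' : List A, w ≠ [] → w' ≠ [] → ((shuffle w w').map β).sum = 0

/-- The unit `1` of the convolution product. -/
def unitCW {A : Type*} : List A → ℂ := fun w => match w with | [] => 1 | _ => 0

/-- `ν^v_ℓ = Σ_j v_j ν_{j,ℓ}` for a letter `ℓ`. -/
noncomputable def nuL {A : Type*} {d : ℕ} (ν : Fin d → A → ℂ) (v : Fin d → ℂ) (ℓ : A) : ℂ :=
  ∑ j, v j * ν j ℓ

/-- `ν^v_w = ν^v_{ℓ₁} + ⋯ + ν^v_{ℓ_n}` for a word `w = ℓ₁⋯ℓ_n`. -/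
noncomputable def nuW {A : Type*} {d : ℕ} (ν : Fin d → A → ℂ) (v : Fin d → ℂ) (w : List A) : ℂ :=
  (w.map (nuL ν v)).sum

/-- The operator `Ξ_v`: `(Ξ_v δ)_w = exp(ν^v_w) δ_w`. -/
noncomputable def XiOp {A : Type*} {d : ℕ} (ν : Fin d → A → ℂ) (v : Fin d → ℂ)
    (δ : List A → ℂ) : List A → ℂ :=
  fun w => Complex.exp (nuW ν v w) * δ w

/-- The operator `ξ_v`: `(ξ_v δ)_w = ν^v_w δ_w`. -/
noncomputable def xiOp {A : Type*} {d : ℕ} (ν : Fin d → A → ℂ) (v : Fin d → ℂ)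
    (δ : List A → ℂ) : List A → ℂ :=
  fun w => nuW ν v w * δ w

/-! By associativity, `η̃ = δ ★ η̂ ★ Ξ_v(δ⁻¹)`. Since `Ξ_v` is a ★-automorphism fixing `η̂`,
`Ξ_v η̃ = η̃` amounts to `η̂ ★ Ξ_v α = α ★ η̂` for `α = δ⁻¹ ★ Ξ_v δ`. As `Ξ_v` acts diagonally on
words and `η̂_∅ ≠ 0`, an induction on word length forces `α = 1`, that is `Ξ_v δ = δ`.
Conversely `Ξ_v δ = δ` gives `Ξ_v(δ⁻¹) = δ⁻¹`, whence both `Ξ_v η̃ = η̃` and `η̃ = δ ★ η̂ ★ δ⁻¹`. -/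

section Convolution

variable {A : Type*}

lemma unitCW_of_ne_nil {w : List A} (hw : w ≠ []) : unitCW w = 0 := by
  cases w with
  | nil => exact absurd rfl hw
  | cons _ _ => rfl

lemma conv_nil (x y : List A → ℂ) : conv x y [] = x [] * y [] := by
  simp [conv]

lemma conv_assoc (x y z : List A → ℂ) : conv (conv x y) z = conv x (conv y z) := by
  funext w
  let f i k := x (w.take i) * (y ((w.drop i).take k) * z (w.drop (i + k)))
  calc conv (conv x y) z w
      = ∑ j ∈ Finset.range (w.length + 1), ∑ i ∈ Finset.range (j + 1), f i (j - i) := by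
        refine Finset.sum_congr rfl fun j hj => ?_
        have hj : j ≤ w.length := Nat.lt_succ_iff.mp (Finset.mem_range.mp hj)
        simp only [conv, List.length_take, min_eq_left hj, Finset.sum_mul]
        refine Finset.sum_congr rfl fun i hi => ?_
        have hi : i ≤ j := Nat.lt_succ_iff.mp (Finset.mem_range.mp hi)
        simp only [f, List.take_take, min_eq_left hi, List.drop_take, Nat.add_sub_cancel' hi,
          mul_assoc]
    _ = ∑ i ∈ Finset.range (w.length + 1), ∑ k ∈ Finset.range (w.length + 1 - i), f i k :=
        Finset.sum_range_diag_flip _ _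
    _ = conv x (conv y z) w := by
        refine Finset.sum_congr rfl fun i hi => ?_
        have hi : i ≤ w.length := Nat.lt_succ_iff.mp (Finset.mem_range.mp hi)
        simp only [f, conv, List.length_drop, Finset.mul_sum, List.drop_drop,
          Nat.sub_add_comm hi]

lemma conv_unitCW (x : List A → ℂ) : conv x unitCW = x := by
  funext w
  rw [conv, Finset.sum_eq_single_of_mem w.length (Finset.self_mem_range_succ _)]
  · simp [unitCW]
  · intro i hi hne
    rw [unitCW_of_ne_nil, mul_zero]
    rw [ne_eq, List.drop_eq_nil_iff]
    have := Finset.mem_range.mp hi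
    omega

lemma unitCW_conv (x : List A → ℂ) : conv unitCW x = x := by
  funext w
  rw [conv, Finset.sum_eq_single_of_mem 0 (by simp)]
  · simp [unitCW]
  · intro i hi hne
    rw [unitCW_of_ne_nil, zero_mul]
    rw [ne_eq, List.take_eq_nil_iff]
    rintro (rfl | rfl)
    · exact hne rfl
    · exact hne (by simpa using hi)

lemma conv_cancel_left {a b : List A → ℂ} (h : conv a b = unitCW) (x : List A → ℂ) :
    conv a (conv b x) = x := by
  rw [← conv_assoc, h, unitCW_conv]

lemma eq_of_conv_eq_unitCW {a b c : List A → ℂ} (hba : conv b a = unitCW)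
    (hac : conv a c = unitCW) : b = c := by
  rw [← conv_unitCW b, ← hac, ← conv_assoc, hba, unitCW_conv]

lemma conv_apply_of_mid_eq_zero {x y : List A → ℂ} {w : List A} (hw : w ≠ [])
    (hmid : ∀ i, 0 < i → i < w.length → x (w.take i) * y (w.drop i) = 0) :
    conv x y w = x [] * y w + x w * y [] := by
  have hlen : 0 < w.length := List.length_pos_iff.mpr hw
  rw [conv, Finset.range_eq_Ico, Finset.sum_Ico_succ_top (Nat.zero_le _),
    Finset.sum_eq_sum_Ico_succ_bot hlen, Finset.sum_eq_zero fun i hi => ?_]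
  · simp
  · rw [Finset.mem_Ico] at hi
    exact hmid i hi.1 hi.2

lemma conv_apply_of_forall_shorter_right {x y : List A → ℂ} {w : List A} (hw : w ≠ [])
    (hy : ∀ u, u ≠ [] → u.length < w.length → y u = 0) :
    conv x y w = x [] * y w + x w * y [] :=
  conv_apply_of_mid_eq_zero hw fun i hi hiw => by
    rw [hy _ (by rw [Ne, List.drop_eq_nil_iff]; omega) (by rw [List.length_drop]; omega),
      mul_zero]

lemma conv_apply_of_forall_shorter_left {x y : List A → ℂ} {w : List A} (hw : w ≠ [])
    (hx : ∀ u, u ≠ [] → u.length < w.length → x u = 0) :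
    conv x y w = x [] * y w + x w * y [] :=
  conv_apply_of_mid_eq_zero hw fun i hi hiw => by
    rw [hx _ (by rw [Ne, List.take_eq_nil_iff, not_or]; exact ⟨hi.ne', hw⟩)
      (by rw [List.length_take]; omega), zero_mul]

end Convolution

section Xi

variable {A : Type*} {d : ℕ} (ν : Fin d → A → ℂ) (v : Fin d → ℂ)

lemma nuW_append (u u' : List A) : nuW ν v (u ++ u') = nuW ν v u + nuW ν v u' := by
  simp [nuW]

lemma XiOp_apply_nil (x : List A → ℂ) : XiOp ν v x [] = x [] := by
  simp [XiOp, nuW]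

lemma XiOp_conv (x y : List A → ℂ) :
    XiOp ν v (conv x y) = conv (XiOp ν v x) (XiOp ν v y) := by
  funext w
  simp only [XiOp, conv, Finset.mul_sum]
  refine Finset.sum_congr rfl fun i _ => ?_
  rw [← List.take_append_drop i w, nuW_append, Complex.exp_add, List.take_append_drop]
  ring

lemma XiOp_unitCW : XiOp ν v (unitCW : List A → ℂ) = unitCW := by
  funext w
  rcases eq_or_ne w [] with rfl | hw
  · exact XiOp_apply_nil ν v _
  · simp only [XiOp, unitCW_of_ne_nil hw, mul_zero]

lemma XiOp_conv_eq_unitCW {a b : List A → ℂ} (h : conv a b = unitCW) :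
    conv (XiOp ν v a) (XiOp ν v b) = unitCW := by
  rw [← XiOp_conv, h, XiOp_unitCW]

lemma XiOp_eq_of_conv_eq_unitCW {a b : List A → ℂ} (hab : conv a b = unitCW)
    (hba : conv b a = unitCW) (ha : XiOp ν v a = a) : XiOp ν v b = b := by
  refine eq_of_conv_eq_unitCW (a := a) ?_ hab
  rw [← ha, XiOp_conv_eq_unitCW ν v hba]

noncomputable def twistedConj (g ginv x : List A → ℂ) : List A → ℂ :=
  conv (conv g x) (XiOp ν v ginv)

lemma twistedConj_apply_nil (g ginv x : List A → ℂ) :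
    twistedConj ν v g ginv x [] = g [] * x [] * ginv [] := by
  rw [twistedConj, conv_nil, conv_nil, XiOp_apply_nil]

lemma twistedConj_twistedConj (g ginv h hinv x : List A → ℂ) :
    twistedConj ν v g ginv (twistedConj ν v h hinv x) =
      twistedConj ν v (conv g h) (conv hinv ginv) x := by
  simp only [twistedConj, XiOp_conv, conv_assoc]

/-- By induction on the length of `w`: once `α` is trivial on shorter words, the two relations
read `x_∅ (e^{ν^v_w} - 1) α_w = 0` and `β_∅ α_w = (e^{ν^v_w} - 1) β_w`, which force `α_w = 0`. -/
lemma eq_unitCW_of_conv_XiOp_comm {x α β : List A → ℂ} (hx : x [] ≠ 0) (hβ : β [] ≠ 0)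
    (hβα : conv β α = XiOp ν v β) (hcomm : conv x (XiOp ν v α) = conv α x) :
    α = unitCW := by
  have hα0 : α [] = 1 := by
    have h := congrFun hβα []
    rw [conv_nil, XiOp_apply_nil] at h
    exact mul_left_cancel₀ hβ (h.trans (mul_one _).symm)
  funext w
  induction hn : w.length using Nat.strong_induction_on generalizing w with
  | _ n ih =>
    rcases eq_or_ne w [] with rfl | hw
    · exact hα0
    have hshort : ∀ u, u ≠ [] → u.length < w.length → α u = 0 := fun u hu hlt =>
      (ih _ (hn ▸ hlt) u rfl).trans (unitCW_of_ne_nil hu)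
    have hshortΞ : ∀ u, u ≠ [] → u.length < w.length → XiOp ν v α u = 0 := fun u hu hlt => by
      rw [XiOp, hshort u hu hlt, mul_zero]
    set c := Complex.exp (nuW ν v w)
    have h₁ : x [] * ((c - 1) * α w) = 0 := by
      have h := congrFun hcomm w
      rw [conv_apply_of_forall_shorter_right hw hshortΞ,
        conv_apply_of_forall_shorter_left hw hshort, XiOp_apply_nil, hα0] at h
      simp only [XiOp] at h
      linear_combination h
    have h₂ : β [] * α w = (c - 1) * β w := by
      have h := congrFun hβα w
      rw [conv_apply_of_forall_shorter_right hw hshort, hα0] at h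
      simp only [XiOp] at h
      linear_combination h
    rw [unitCW_of_ne_nil hw]
    by_cases hc : c = 1
    · simpa [hc, hβ] using h₂
    · simpa [hx, sub_ne_zero.mpr hc] using h₁

lemma XiOp_eq_of_XiOp_twistedConj_eq {g ginv x : List A → ℂ} (hx₀ : x [] ≠ 0)
    (hx : XiOp ν v x = x) (hg₁ : conv g ginv = unitCW) (hg₂ : conv ginv g = unitCW)
    (h : XiOp ν v (twistedConj ν v g ginv x) = twistedConj ν v g ginv x) :
    XiOp ν v g = g := by
  set α := conv ginv (XiOp ν v g)
  have hgα : conv g α = XiOp ν v g := conv_cancel_left hg₁ _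
  have hcomm : conv x (XiOp ν v α) = conv α x := by
    have h' := congrArg (fun t => conv ginv (conv t (XiOp ν v (XiOp ν v g)))) h
    simp only [twistedConj, XiOp_conv, hx, conv_assoc] at h'
    rw [XiOp_conv_eq_unitCW ν v (XiOp_conv_eq_unitCW ν v hg₂), conv_unitCW,
      conv_cancel_left hg₂] at h'
    rw [XiOp_conv, ← h', conv_assoc]
  have hg₀ : g [] ≠ 0 := by
    have h₀ := congrFun hg₂ []
    rw [conv_nil] at h₀
    exact right_ne_zero_of_mul_eq_one h₀
  rw [← hgα, eq_unitCW_of_conv_XiOp_comm ν v hx₀ hg₀ hgα hcomm, conv_unitCW]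

lemma XiOp_twistedConj_eq_iff {g ginv x : List A → ℂ} (hx₀ : x [] ≠ 0)
    (hx : XiOp ν v x = x) (hg₁ : conv g ginv = unitCW) (hg₂ : conv ginv g = unitCW) :
    XiOp ν v (twistedConj ν v g ginv x) = twistedConj ν v g ginv x ↔ XiOp ν v g = g := by
  refine ⟨XiOp_eq_of_XiOp_twistedConj_eq ν v hx₀ hx hg₁ hg₂, fun hg => ?_⟩
  have hginv := XiOp_eq_of_conv_eq_unitCW ν v hg₁ hg₂ hg
  rw [twistedConj, XiOp_conv, XiOp_conv, hx, hg, hginv, hginv]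

end Xi

theorem stmt19_general {A : Type*} {d : ℕ} (ν : Fin d → A → ℂ)
    (v : Fin d → ℂ) (η : List A → ℂ) (hη : isGrp η)
    (κ κinv κt κtinv δ δinv ηhat ηtil : List A → ℂ)
    (hκinv₂ : conv κinv κ = unitCW)
    (hκtinv₁ : conv κt κtinv = unitCW)
    (hηhat : ηhat = conv (conv κ η) (XiOp ν v κinv))
    (hnorm : XiOp ν v ηhat = ηhat)
    (hηtil : ηtil = conv (conv κt η) (XiOp ν v κtinv))
    (hδ : δ = conv κt κinv)
    (hδinv₂ : conv δinv δ = unitCW) :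
    (XiOp ν v ηtil = ηtil ↔ XiOp ν v δ = δ) ∧
    (XiOp ν v ηtil = ηtil → ηtil = conv (conv δ ηhat) δinv) := by
  have hδinv₁ : conv δ (conv κ κtinv) = unitCW := by
    rw [hδ, conv_assoc, conv_cancel_left hκinv₂, hκtinv₁]
  obtain rfl : δinv = conv κ κtinv := eq_of_conv_eq_unitCW hδinv₂ hδinv₁
  have hδκ : conv δ κ = κt := by rw [hδ, conv_assoc, hκinv₂, conv_unitCW]
  have hconj : ηtil = twistedConj ν v δ (conv κ κtinv) ηhat := by
    rw [hηhat, ← twistedConj, twistedConj_twistedConj, hδκ, conv_cancel_left hκinv₂, hηtil,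
      twistedConj]
  have hηhat₀ : ηhat [] ≠ 0 := by
    have hκ₀ := congrFun hκinv₂ []
    rw [conv_nil] at hκ₀
    rw [hηhat, ← twistedConj, twistedConj_apply_nil, hη.1, mul_one, mul_comm, hκ₀]
    exact one_ne_zero
  have hiff := XiOp_twistedConj_eq_iff ν v hηhat₀ hnorm hδinv₁ hδinv₂
  subst hconj
  refine ⟨hiff, fun h => ?_⟩
  rw [twistedConj, XiOp_eq_of_conv_eq_unitCW ν v hδinv₁ hδinv₂ (hiff.1 h)]

/-- freedom in the normal form for group elements. With
`η̂ = κ★η★(Ξ_v(κ⁻¹))` satisfying `Ξ_v η̂ = η̂`, and `η̃ = κ̃★η★(Ξ_v(κ̃⁻¹))`,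
`δ = κ̃★κ⁻¹`, one has `Ξ_v η̃ = η̃` iff `Ξ_v δ = δ`, and in that case
`η̃ = δ★η̂★δ⁻¹`. -/
theorem stmt19 {A : Type*} [Countable A] {d : ℕ} (hd : 1 ≤ d) (ν : Fin d → A → ℂ)
    (v : Fin d → ℂ) (η : List A → ℂ) (hη : isGrp η)
    (κ κinv κt κtinv δ δinv ηhat ηtil : List A → ℂ)
    (hκ : isGrp κ) (hκt : isGrp κt)
    (hκinv₁ : conv κ κinv = unitCW) (hκinv₂ : conv κinv κ = unitCW)
    (hκtinv₁ : conv κt κtinv = unitCW) (hκtinv₂ : conv κtinv κt = unitCW)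
    (hηhat : ηhat = conv (conv κ η) (XiOp ν v κinv))
    (hnorm : XiOp ν v ηhat = ηhat)
    (hηtil : ηtil = conv (conv κt η) (XiOp ν v κtinv))
    (hδ : δ = conv κt κinv)
    (hδinv₁ : conv δ δinv = unitCW) (hδinv₂ : conv δinv δ = unitCW) :
    (XiOp ν v ηtil = ηtil ↔ XiOp ν v δ = δ) ∧
    (XiOp ν v ηtil = ηtil → ηtil = conv (conv δ ηhat) δinv) :=
  stmt19_general ν v η hη κ κinv κt κtinv δ δinv ηhat ηtil hκinv₂ hκtinv₁ hηhat hnorm hηtil hδ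
    hδinv₂
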